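/- Let E be a Hilbert C*-module satisfying property [H], let (ζ_n) be a bounded sequence in E, and suppose (ζ_{n_k}) is a subsequence and ζ ∈ E satisfy ⟨v, ζ_{n_k}⟩ → ⟨v, ζ⟩ for every v ∈ E. Then ‖C ζ_{n_k} − C ζ‖ → 0 for every compact operator C ∈ K(E). -/

import Mathlib

open scoped RightActions
open CStarModule Filter Topology

/-- The Hilbert C⋆-module class as it stood in the older Mathlib (right action `y <• a`,
with `⟪x, y <• a⟫ = ⟪x, y⟫ * a`); Mathlib's `CStarModule` now takes `[SMul A E]` instead. -/
class CStarModuleRight (A E : Type*) [NonUnitalSemiring A] [StarRing A]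
    [Module ℂ A] [AddCommGroup E] [Module ℂ E] [PartialOrder A] [SMul Aᵐᵒᵖ E] [Norm A] [Norm E]
    extends Inner A E where
  inner_add_right {x} {y} {z} : inner x (y + z) = inner x y + inner x z
  inner_self_nonneg {x} : 0 ≤ inner x x
  inner_self {x} : inner x x = 0 ↔ x = 0
  inner_op_smul_right {a : A} {x y : E} : inner x (y <• a) = inner x y * a
  inner_smul_right_complex {z : ℂ} {x} {y} : inner x (z • y) = z • inner x y
  star_inner x y : star (inner x y) = inner y x
  norm_eq_sqrt_norm_inner_self x : ‖x‖ = √‖inner x x‖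

section
variable (A E : Type*) [NonUnitalCStarAlgebra A] [PartialOrder A] [StarOrderedRing A]
  [NormedAddCommGroup E] [NormedSpace ℂ E] [SMul Aᵐᵒᵖ E] [CStarModuleRight A E]

/-- The rank-one operator predicate: `T = θ_{u,v}`, i.e. `T z = u⟪v, z⟫`. -/
def IsRankOne (T : E →L[ℂ] E) : Prop := ∃ u v : E, ∀ z, T z = u <• (inner (𝕜 := A) v z)

/-- The set `K(E)` of compact operators: the closure of the linear span of rank-one operators. -/
def compactOp : Set (E →L[ℂ] E) :=
  closure (Submodule.span ℂ {T : E →L[ℂ] E | IsRankOne A E T} : Set (E →L[ℂ] E))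

/-- Property [H]: every bounded sequence has a weakly convergent subsequence. -/
def PropertyH : Prop :=
  ∀ ζ : ℕ → E, Bornology.IsBounded (Set.range ζ) →
    ∃ φ : ℕ → ℕ, StrictMono φ ∧ ∃ z : E, ∀ v : E,
      Tendsto (fun k => inner (𝕜 := A) v (ζ (φ k))) atTop (nhds (inner (𝕜 := A) v z))

/-- on a Hilbert C*-module with property [H], a weakly convergent bounded
subsequence is mapped to a norm-convergent sequence by every compact operator. -/
theorem stmt2 (hH : PropertyH A E) (ζ : ℕ → E) (hb : Bornology.IsBounded (Set.range ζ))
    (φ : ℕ → ℕ) (hφ : StrictMono φ) (z : E)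
    (hw : ∀ v : E, Tendsto (fun k => inner (𝕜 := A) v (ζ (φ k))) atTop
      (nhds (inner (𝕜 := A) v z))) :
    ∀ C ∈ compactOp A E, Tendsto (fun k => ‖C (ζ (φ k)) - C z‖) atTop (nhds 0) := by
  have inner_sub_right' : ∀ x y w : E,
      inner (𝕜 := A) x (y - w) = inner (𝕜 := A) x y - inner (𝕜 := A) x w := by
    intro x y w
    have h := CStarModuleRight.inner_add_right (A := A) (x := x) (y := y - w) (z := w)
    rw [sub_add_cancel] at h
    rw [h, add_sub_cancel_right]
  have inner_sub_left' : ∀ x y w : E,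
      inner (𝕜 := A) (y - w) x = inner (𝕜 := A) y x - inner (𝕜 := A) w x := by
    intro x y w
    rw [← CStarModuleRight.star_inner (A := A) x (y - w), inner_sub_right', star_sub,
      CStarModuleRight.star_inner (A := A), CStarModuleRight.star_inner (A := A)]
  have inner_op_smul_left' : ∀ (a : A) (x y : E),
      inner (𝕜 := A) (y <• a) x = star a * inner (𝕜 := A) y x := by
    intro a x y
    rw [← CStarModuleRight.star_inner (A := A) x (y <• a),
      CStarModuleRight.inner_op_smul_right (A := A), star_mul, CStarModuleRight.star_inner (A := A)]
  have norm_sq_eq' : ∀ x : E, ‖x‖ ^ 2 = ‖inner (𝕜 := A) x x‖ := by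
    intro x
    rw [CStarModuleRight.norm_eq_sqrt_norm_inner_self (A := A) x, Real.sq_sqrt (norm_nonneg _)]
  -- helper: u <• a - u <• b = u <• (a - b)
  have hsmul_sub : ∀ (u : E) (a b : A), u <• a - u <• b = u <• (a - b) := by
    intro u a b
    have h : ∀ x : E, x = 0 ↔ inner (𝕜 := A) x x = 0 := fun x => (CStarModuleRight.inner_self (A := A)).symm
    have : (u <• a - u <• b) - u <• (a - b) = 0 := by
      rw [h]
      simp only [inner_sub_left', inner_sub_right', inner_op_smul_left', CStarModuleRight.inner_op_smul_right,
        star_sub, mul_sub, sub_mul]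
      abel
    exact sub_eq_zero.mp this
  -- helper: ‖u <• a‖ ≤ ‖u‖ * ‖a‖
  have hsmul_norm : ∀ (u : E) (a : A), ‖u <• a‖ ≤ ‖u‖ * ‖a‖ := by
    intro u a
    have h1 : ‖u <• a‖ ^ 2 = ‖star a * inner (𝕜 := A) u u * a‖ := by
      rw [norm_sq_eq']
      congr 1
      rw [inner_op_smul_left', CStarModuleRight.inner_op_smul_right, mul_assoc]
    have h2 : ‖star a * inner (𝕜 := A) u u * a‖ ≤ ‖a‖ * ‖inner (𝕜 := A) u u‖ * ‖a‖ := by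
      calc ‖star a * inner (𝕜 := A) u u * a‖ ≤ ‖star a * inner (𝕜 := A) u u‖ * ‖a‖ :=
            norm_mul_le _ _
        _ ≤ ‖star a‖ * ‖inner (𝕜 := A) u u‖ * ‖a‖ := by
            gcongr; exact norm_mul_le _ _
        _ = ‖a‖ * ‖inner (𝕜 := A) u u‖ * ‖a‖ := by rw [norm_star]
    have h3 : ‖u <• a‖ ^ 2 ≤ (‖u‖ * ‖a‖) ^ 2 := by
      rw [h1]
      calc ‖star a * inner (𝕜 := A) u u * a‖ ≤ ‖a‖ * ‖inner (𝕜 := A) u u‖ * ‖a‖ := h2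
        _ = ‖inner (𝕜 := A) u u‖ * (‖a‖ * ‖a‖) := by ring
        _ = ‖u‖ ^ 2 * (‖a‖ * ‖a‖) := by rw [norm_sq_eq']
        _ = (‖u‖ * ‖a‖) ^ 2 := by ring
    exact (pow_le_pow_iff_left₀ (norm_nonneg _) (by positivity) two_ne_zero).mp h3
  -- key lemma for span elements
  have key : ∀ T : E →L[ℂ] E,
      T ∈ (Submodule.span ℂ {T : E →L[ℂ] E | IsRankOne A E T} : Submodule ℂ (E →L[ℂ] E)) →
      Tendsto (fun k => T (ζ (φ k)) - T z) atTop (𝓝 0) := by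
    intro T hT
    induction hT using Submodule.span_induction with
    | mem T hT =>
      obtain ⟨u, v, huv⟩ := hT
      simp only [huv]
      have hnorm : ∀ k, ‖u <• (inner (𝕜 := A) v (ζ (φ k))) - u <• (inner (𝕜 := A) v z)‖
          ≤ ‖u‖ * ‖inner (𝕜 := A) v (ζ (φ k)) - inner (𝕜 := A) v z‖ := by
        intro k
        rw [hsmul_sub]
        exact hsmul_norm _ _
      have hz : Tendsto (fun k => ‖u‖ * ‖inner (𝕜 := A) v (ζ (φ k)) - inner (𝕜 := A) v z‖)
          atTop (𝓝 0) := by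
        have := (hw v).sub_const (inner (𝕜 := A) v z)
        simp only [sub_self] at this
        have hn := this.norm
        rw [norm_zero] at hn
        simpa using hn.const_mul ‖u‖
      exact squeeze_zero_norm hnorm hz
    | zero => simpa using tendsto_const_nhds
    | add S T _ _ hS hT =>
      have := hS.add hT
      simp only [ContinuousLinearMap.add_apply, add_zero] at this ⊢
      convert this using 2 with k
      abel
    | smul c T _ hT =>
      have := hT.const_smul c
      simp only [ContinuousLinearMap.coe_smul', Pi.smul_apply, smul_zero] at this ⊢
      convert this using 2 with k
      rw [smul_sub]
  -- boundedness
  obtain ⟨r, hr⟩ := hb.exists_norm_le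
  set M : ℝ := r + ‖z‖ + 1 with hM
  have hMpos : 0 < M := by
    have : (0 : ℝ) ≤ r := le_trans (norm_nonneg _) (hr (ζ 0) ⟨0, rfl⟩)
    positivity
  have hbound : ∀ k, ‖ζ (φ k) - z‖ ≤ M := by
    intro k
    calc ‖ζ (φ k) - z‖ ≤ ‖ζ (φ k)‖ + ‖z‖ := norm_sub_le _ _
      _ ≤ r + ‖z‖ := by gcongr; exact hr _ ⟨φ k, rfl⟩
      _ ≤ M := by simp [hM]
  -- closure argument
  intro C hC
  rw [Metric.tendsto_atTop]
  intro ε hε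
  obtain ⟨T, hTmem, hTC⟩ : ∃ T ∈ (Submodule.span ℂ {T : E →L[ℂ] E | IsRankOne A E T} :
      Set (E →L[ℂ] E)), ‖C - T‖ < ε / (2 * M) := by
    have := Metric.mem_closure_iff.mp hC (ε / (2 * M)) (by positivity)
    obtain ⟨T, hT1, hT2⟩ := this
    exact ⟨T, hT1, by rwa [dist_eq_norm] at hT2⟩
  have hT := key T hTmem
  rw [Metric.tendsto_atTop] at hT
  obtain ⟨N, hN⟩ := hT (ε / 2) (by positivity)
  refine ⟨N, fun k hk => ?_⟩
  have h1 : ‖C (ζ (φ k)) - C z - (T (ζ (φ k)) - T z)‖ ≤ ‖C - T‖ * M := by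
    have : C (ζ (φ k)) - C z - (T (ζ (φ k)) - T z) = (C - T) (ζ (φ k) - z) := by
      simp only [ContinuousLinearMap.sub_apply, map_sub]
      abel
    rw [this]
    calc ‖(C - T) (ζ (φ k) - z)‖ ≤ ‖C - T‖ * ‖ζ (φ k) - z‖ := (C - T).le_opNorm _
      _ ≤ ‖C - T‖ * M := by gcongr; exact hbound k
  have h2 : ‖C - T‖ * M < ε / 2 := by
    calc ‖C - T‖ * M < (ε / (2 * M)) * M := by
          rcases eq_or_lt_of_le (norm_nonneg (C - T)) with h | h
          · rw [← h, zero_mul]; positivity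
          · exact mul_lt_mul_of_pos_right hTC hMpos
      _ = ε / 2 := by field_simp
  have h3 := hN k hk
  rw [Real.dist_eq, sub_zero, abs_of_nonneg (norm_nonneg _)]
  calc ‖C (ζ (φ k)) - C z‖ ≤ ‖C (ζ (φ k)) - C z - (T (ζ (φ k)) - T z)‖
        + ‖T (ζ (φ k)) - T z‖ := by
        have := norm_add_le (C (ζ (φ k)) - C z - (T (ζ (φ k)) - T z)) (T (ζ (φ k)) - T z)
        simpa using this
    _ < ε / 2 + ε / 2 := by
        have : ‖C (ζ (φ k)) - C z - (T (ζ (φ k)) - T z)‖ < ε / 2 := lt_of_le_of_lt h1 h2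
        have hd : ‖T (ζ (φ k)) - T z‖ < ε / 2 := by
          have := h3; rwa [dist_zero_right] at this
        linarith
    _ = ε := by ring

end
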